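/- arXiv:2010.15354 — 3 statements merged into one kernel-verified Lean document; each statement's English description precedes it below -/
import Mathlib

section
/- The function g(x, y) = -log₂(1 - |x|²/y) defined on the set {(x,y) ∈ ℂ × ℝ : y > |x|²} is jointly convex in (x, y). -/
/-!
`‖x‖² / y` is jointly convex for `y > 0`: after the triangle inequality this is Sedrakyan's
inequality `(s + t)² / (y + v) ≤ s² / y + t² / v`. Hence `1 - ‖x‖² / y` is concave on the
domain, which is a sublevel set of `‖x‖² / y`, and composing with the convex decreasing function
`-log₂` keeps the result convex.
-/

open Set Real

theorem ConvexOn.comp_concaveOn_of_mapsTo {𝕜 E α β : Type*} [Semiring 𝕜] [PartialOrder 𝕜]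
    [AddCommMonoid E] [SMul 𝕜 E] [AddCommMonoid α] [PartialOrder α] [SMul 𝕜 α]
    [AddCommMonoid β] [PartialOrder β] [SMul 𝕜 β] {s : Set E} {t : Set β} {f : E → β}
    {g : β → α} (hg : ConvexOn 𝕜 t g) (hf : ConcaveOn 𝕜 s f) (hg' : AntitoneOn g t)
    (hst : MapsTo f s t) : ConvexOn 𝕜 s (g ∘ f) :=
  ⟨hf.1, fun _ hx _ hy _ _ ha hb hab =>
    (hg' (hg.1 (hst hx) (hst hy) ha hb hab) (hst (hf.1 hx hy ha hb hab))
      (hf.2 hx hy ha hb hab)).trans (hg.2 (hst hx) (hst hy) ha hb hab)⟩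

theorem concaveOn_logb {b : ℝ} (hb : 1 ≤ b) : ConcaveOn ℝ (Ioi 0) (logb b) := by
  have h := strictConcaveOn_log_Ioi.concaveOn.smul (inv_nonneg.2 (log_nonneg hb))
  refine h.congr fun x _ => ?_
  simp only [smul_eq_mul, logb, div_eq_inv_mul]

theorem add_sq_div_add_le {s t y v : ℝ} (hy : 0 < y) (hv : 0 < v) :
    (s + t) ^ 2 / (y + v) ≤ s ^ 2 / y + t ^ 2 / v := by
  rw [div_add_div _ _ hy.ne' hv.ne', div_le_div_iff₀ (by positivity) (by positivity)]
  nlinarith [sq_nonneg (s * v - t * y), mul_pos hy hv]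

section NormSqDiv

variable {E : Type*} [SeminormedAddCommGroup E]

theorem setOf_norm_sq_lt_eq :
    {p : E × ℝ | ‖p.1‖ ^ 2 < p.2} = {p ∈ {p : E × ℝ | 0 < p.2} | ‖p.1‖ ^ 2 / p.2 < 1} := by
  ext ⟨x, y⟩
  constructor
  · intro h
    have hy : 0 < y := (sq_nonneg ‖x‖).trans_lt h
    exact ⟨hy, (div_lt_one hy).2 h⟩
  · rintro ⟨hy, h⟩
    exact (div_lt_one hy).1 h

variable [NormedSpace ℝ E]

theorem convexOn_norm_sq_div :
    ConvexOn ℝ {p : E × ℝ | 0 < p.2} (fun p => ‖p.1‖ ^ 2 / p.2) := by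
  refine convexOn_iff_forall_pos.2 ⟨(convex_Ioi 0).linear_preimage (LinearMap.snd ℝ E ℝ), ?_⟩
  rintro ⟨x, y⟩ (hy : 0 < y) ⟨u, v⟩ (hv : 0 < v) a b ha hb -
  have hnorm : ‖a • x + b • u‖ ≤ a * ‖x‖ + b * ‖u‖ := by
    simpa only [norm_smul_of_nonneg ha.le, norm_smul_of_nonneg hb.le] using
      norm_add_le (a • x) (b • u)
  calc ‖a • x + b • u‖ ^ 2 / (a * y + b * v)
      ≤ (a * ‖x‖ + b * ‖u‖) ^ 2 / (a * y + b * v) := by gcongr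
    _ ≤ (a * ‖x‖) ^ 2 / (a * y) + (b * ‖u‖) ^ 2 / (b * v) :=
      add_sq_div_add_le (mul_pos ha hy) (mul_pos hb hv)
    _ = a * (‖x‖ ^ 2 / y) + b * (‖u‖ ^ 2 / v) := by field_simp

theorem convex_setOf_norm_sq_lt : Convex ℝ {p : E × ℝ | ‖p.1‖ ^ 2 < p.2} := by
  rw [setOf_norm_sq_lt_eq]
  exact convexOn_norm_sq_div.convex_lt 1

theorem concaveOn_one_sub_norm_sq_div :
    ConcaveOn ℝ {p : E × ℝ | ‖p.1‖ ^ 2 < p.2} (fun p => 1 - ‖p.1‖ ^ 2 / p.2) := by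
  have hsub : {p : E × ℝ | ‖p.1‖ ^ 2 < p.2} ⊆ {p | 0 < p.2} := by
    rw [setOf_norm_sq_lt_eq]
    exact sep_subset _ _
  exact ((convexOn_norm_sq_div.subset hsub convex_setOf_norm_sq_lt).neg.add_const 1).congr
    fun _ _ => neg_add_eq_sub _ _

end NormSqDiv

/-- The function `g(x, y) = -log₂(1 - |x|²/y)` is jointly convex on
`{(x,y) ∈ ℂ × ℝ : y > |x|²}`. -/
theorem neg_logb_one_sub_sq_div_convexOn :
    ConvexOn ℝ {p : ℂ × ℝ | ‖p.1‖ ^ 2 < p.2}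
      (fun p : ℂ × ℝ => -Real.logb 2 (1 - ‖p.1‖ ^ 2 / p.2)) := by
  have hmaps : MapsTo (fun p : ℂ × ℝ => 1 - ‖p.1‖ ^ 2 / p.2) {p | ‖p.1‖ ^ 2 < p.2} (Ioi 0) := by
    intro p hp
    rw [setOf_norm_sq_lt_eq] at hp
    exact sub_pos.2 hp.2
  exact (concaveOn_logb one_le_two).neg.comp_concaveOn_of_mapsTo concaveOn_one_sub_norm_sq_div
    (strictMonoOn_logb one_lt_two).monotoneOn.neg hmaps
end

section
/- For all complex numbers x, x̂ and reals b, b̂ > 0: log₂(1 + |x|²/b) ≥ log₂(1 + |x̂|²/b̂) + 2Re(x̂* x)/(b̂ ln 2) - (b + |x|²)|x̂|²/((b̂ + |x̂|²) b̂ ln 2) - |x̂|²/(b̂ ln 2), with equality when x = x̂ and b = b̂. -/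
/-!
With `y = b + ‖x‖²` the rate is `log (1 + ‖x‖² / b) = -log (1 - ‖x‖² / y)`. The map
`q ↦ -log (1 - q)` is convex and increasing on `q < 1`, and `(x, y) ↦ ‖x‖² / y` is jointly convex
on `y > 0` (its tangent bound at `(x̂, ŷ)` is `‖ŷ • x - y • x̂‖² ≥ 0`), so chaining the two tangent
bounds at `(x̂, b̂ + ‖x̂‖²)` bounds the rate below by its linearisation.
-/

open Real

theorem neg_log_one_sub_tangent_le {q qh : ℝ} (hq : q < 1) (hqh : qh < 1) :
    -log (1 - qh) + (q - qh) / (1 - qh) ≤ -log (1 - q) := by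
  have hpos : 0 < 1 - qh := by linarith
  have key := log_le_sub_one_of_pos (div_pos (sub_pos.2 hq) hpos)
  rw [log_div (by linarith) hpos.ne'] at key
  have rearrange : (1 - q) / (1 - qh) - 1 = -((q - qh) / (1 - qh)) := by field_simp; ring
  linarith

theorem log_one_add_div_eq_neg_log_one_sub {a b : ℝ} (ha : 0 ≤ a) (hb : 0 < b) :
    log (1 + a / b) = -log (1 - a / (b + a)) := by
  have hba : 0 < b + a := by linarith
  rw [← log_inv]
  congr 1
  rw [one_sub_div hba.ne', add_sub_cancel_right, inv_div, one_add_div hb.ne', add_comm]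

section InnerProductSpace

variable {E : Type*} [NormedAddCommGroup E] [InnerProductSpace ℝ E]

theorem two_mul_inner_div_sub_le_norm_sq_div (x xh : E) {y yh : ℝ} (hy : 0 < y) (hyh : 0 < yh) :
    2 * inner ℝ xh x / yh - ‖xh‖ ^ 2 * y / yh ^ 2 ≤ ‖x‖ ^ 2 / y := by
  have hsq : 0 ≤ ‖yh • x - y • xh‖ ^ 2 / (y * yh ^ 2) := by positivity
  rw [norm_sub_sq_real, norm_smul, norm_smul, real_inner_smul_left, real_inner_smul_right,
    real_inner_comm, Real.norm_of_nonneg hy.le, Real.norm_of_nonneg hyh.le] at hsq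
  have expand : ‖x‖ ^ 2 / y - (2 * inner ℝ xh x / yh - ‖xh‖ ^ 2 * y / yh ^ 2)
      = ((yh * ‖x‖) ^ 2 - 2 * (yh * (y * inner ℝ xh x)) + (y * ‖xh‖) ^ 2) / (y * yh ^ 2) := by
    field_simp
    ring
  linarith

theorem log_one_add_norm_sq_div_tangent_le (x xh : E) {b bh : ℝ} (hb : 0 < b) (hbh : 0 < bh) :
    log (1 + ‖xh‖ ^ 2 / bh) + 2 * inner ℝ xh x / bh
        - (b + ‖x‖ ^ 2) * ‖xh‖ ^ 2 / (bh + ‖xh‖ ^ 2) / bh - ‖xh‖ ^ 2 / bh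
      ≤ log (1 + ‖x‖ ^ 2 / b) := by
  have hy : 0 < b + ‖x‖ ^ 2 := by positivity
  have hyh : 0 < bh + ‖xh‖ ^ 2 := by positivity
  have hq : ‖x‖ ^ 2 / (b + ‖x‖ ^ 2) < 1 := (div_lt_one hy).2 (by linarith)
  have hqh : ‖xh‖ ^ 2 / (bh + ‖xh‖ ^ 2) < 1 := (div_lt_one hyh).2 (by linarith)
  rw [log_one_add_div_eq_neg_log_one_sub (sq_nonneg _) hb,
    log_one_add_div_eq_neg_log_one_sub (sq_nonneg _) hbh]
  have linearised := div_le_div_of_nonneg_right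
    (sub_le_sub_right (two_mul_inner_div_sub_le_norm_sq_div x xh hy hyh)
      (‖xh‖ ^ 2 / (bh + ‖xh‖ ^ 2)))
    (sub_pos.2 hqh).le
  have simplify : (2 * inner ℝ xh x / (bh + ‖xh‖ ^ 2)
        - ‖xh‖ ^ 2 * (b + ‖x‖ ^ 2) / (bh + ‖xh‖ ^ 2) ^ 2 - ‖xh‖ ^ 2 / (bh + ‖xh‖ ^ 2))
        / (1 - ‖xh‖ ^ 2 / (bh + ‖xh‖ ^ 2))
      = 2 * inner ℝ xh x / bh - (b + ‖x‖ ^ 2) * ‖xh‖ ^ 2 / (bh + ‖xh‖ ^ 2) / bh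
        - ‖xh‖ ^ 2 / bh := by
    rw [one_sub_div hyh.ne', add_sub_cancel_right]
    field_simp
  linarith [neg_log_one_sub_tangent_le hq hqh]

theorem log_one_add_norm_sq_div_tangent_self (x : E) {b : ℝ} (hb : 0 < b) :
    log (1 + ‖x‖ ^ 2 / b) + 2 * inner ℝ x x / b
        - (b + ‖x‖ ^ 2) * ‖x‖ ^ 2 / (b + ‖x‖ ^ 2) / b - ‖x‖ ^ 2 / b
      = log (1 + ‖x‖ ^ 2 / b) := by
  have hy : 0 < b + ‖x‖ ^ 2 := by positivity
  rw [real_inner_self_eq_norm_sq]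
  field_simp
  ring

end InnerProductSpace

/-- Path-following lower bound for the rate function `log₂(1 + |x|²/b)`:
for all `x, x̂ ∈ ℂ` and `b, b̂ > 0`,
`log₂(1+|x|²/b) ≥ log₂(1+|x̂|²/b̂) + 2Re(x̂* x)/(b̂ ln 2)
  - (b+|x|²)|x̂|²/((b̂+|x̂|²) b̂ ln 2) - |x̂|²/(b̂ ln 2)`,
with equality when `x = x̂` and `b = b̂`. -/
theorem rate_taylor_lower_bound (x xh : ℂ) (b bh : ℝ) (hb : 0 < b) (hbh : 0 < bh) :
    (Real.logb 2 (1 + ‖xh‖ ^ 2 / bh)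
        + 2 * ((starRingEnd ℂ) xh * x).re / (bh * Real.log 2)
        - (b + ‖x‖ ^ 2) * ‖xh‖ ^ 2
            / ((bh + ‖xh‖ ^ 2) * bh * Real.log 2)
        - ‖xh‖ ^ 2 / (bh * Real.log 2)
      ≤ Real.logb 2 (1 + ‖x‖ ^ 2 / b)) ∧
    (x = xh → b = bh →
      Real.logb 2 (1 + ‖x‖ ^ 2 / b)
        = Real.logb 2 (1 + ‖xh‖ ^ 2 / bh)
          + 2 * ((starRingEnd ℂ) xh * x).re / (bh * Real.log 2)
          - (b + ‖x‖ ^ 2) * ‖xh‖ ^ 2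
              / ((bh + ‖xh‖ ^ 2) * bh * Real.log 2)
          - ‖xh‖ ^ 2 / (bh * Real.log 2)) := by
  have hre : ((starRingEnd ℂ) xh * x).re = inner ℝ xh x := by rw [Complex.inner, mul_comm]
  simp only [Real.logb, hre, div_mul_eq_div_div]
  rw [← add_div, ← sub_div, ← sub_div]
  refine ⟨div_le_div_of_nonneg_right (log_one_add_norm_sq_div_tangent_le x xh hb hbh)
    (log_nonneg one_le_two), ?_⟩
  rintro rfl rfl
  rw [log_one_add_norm_sq_div_tangent_self x hb]
end

section
/- If X: C → ℝ is nonnegative and Y: C → ℝ is positive on a set C, then the iteration z⁽ˡ⁾ = √(X(w⁽ˡ⁻¹⁾))/Y(w⁽ˡ⁻¹⁾), w⁽ˡ⁾ ∈ argmax_{w∈C} [2z⁽ˡ⁾√(X(w)) - (z⁽ˡ⁾)² Y(w)] produces a nondecreasing sequence of ratios X(w⁽ˡ⁾)/Y(w⁽ˡ⁾). -/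
/-!
Since `x / y - (2 * z * √x - z ^ 2 * y) = (√x - z * y) ^ 2 / y`, the surrogate is a lower bound
for the ratio that is attained at `z = √x / y`. The iteration is therefore a minorize–maximize
scheme: the ratio at `w l` equals the surrogate there, maximizing cannot decrease the surrogate,
and the surrogate at `w (l + 1)` is below the ratio there.
-/

noncomputable def quadraticSurrogate (z x y : ℝ) : ℝ := 2 * z * √x - z ^ 2 * y

theorem quadraticSurrogate_le_div (z : ℝ) {x y : ℝ} (hx : 0 ≤ x) (hy : 0 < y) :
    quadraticSurrogate z x y ≤ x / y := by
  rw [quadraticSurrogate, le_div_iff₀ hy]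
  nlinarith [sq_nonneg (√x - z * y), Real.sq_sqrt hx]

theorem quadraticSurrogate_sqrt_div_self {x : ℝ} (hx : 0 ≤ x) (y : ℝ) :
    quadraticSurrogate (√x / y) x y = x / y := by
  rcases eq_or_ne y 0 with rfl | hy
  · simp [quadraticSurrogate]
  · rw [quadraticSurrogate]
    field_simp
    rw [Real.sq_sqrt hx]
    ring

/-- Monotonicity of the quadratic transform for fractional programming:
maximizing `2z√X(w) - z²Y(w)` with `z` computed from the previous iterate
produces a nondecreasing sequence of ratios `X/Y`. -/
theorem quadratic_transform_monotone {α : Type*} (C : Set α) (X Y : α → ℝ)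
    (hX : ∀ w ∈ C, 0 ≤ X w) (hY : ∀ w ∈ C, 0 < Y w)
    (w : ℕ → α) (hw : ∀ l, w l ∈ C)
    (hmax : ∀ l, ∀ v ∈ C,
      2 * (Real.sqrt (X (w l)) / Y (w l)) * Real.sqrt (X v)
          - (Real.sqrt (X (w l)) / Y (w l)) ^ 2 * Y v
        ≤ 2 * (Real.sqrt (X (w l)) / Y (w l)) * Real.sqrt (X (w (l + 1)))
          - (Real.sqrt (X (w l)) / Y (w l)) ^ 2 * Y (w (l + 1))) :
    ∀ l, X (w l) / Y (w l) ≤ X (w (l + 1)) / Y (w (l + 1)) := by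
  intro l
  set z := √(X (w l)) / Y (w l)
  calc X (w l) / Y (w l) = quadraticSurrogate z (X (w l)) (Y (w l)) :=
        (quadraticSurrogate_sqrt_div_self (hX _ (hw l)) _).symm
    _ ≤ quadraticSurrogate z (X (w (l + 1))) (Y (w (l + 1))) := hmax l (w l) (hw l)
    _ ≤ X (w (l + 1)) / Y (w (l + 1)) :=
        quadraticSurrogate_le_div z (hX _ (hw (l + 1))) (hY _ (hw (l + 1)))
end
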